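/- arXiv:1512.06233 — 2 statements merged into one kernel-verified Lean document; each statement's English description precedes it below -/
import Mathlib

section
/- Composition of processes is associative up to failures equivalence: (P ; Q) ; R ≈_f P ; (Q ; R) for all processes P, Q, R. -/
set_option linter.unnecessarySeqFocus false

/-! # CCS with simultaneous actions (Abramsky, "Process Realizability") -/

/-- Labels: names (`inl`) and co-names (`inr`). -/
abbrev Label : Type := ℕ ⊕ ℕ

/-- The involution `λ ↦ λ̄` exchanging names and co-names. -/
def Label.bar : Label → Label
  | .inl n => .inr n
  | .inr n => .inl n

/-- Actions: finite sets of labels, performed simultaneously.  `τ = ∅`. -/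
abbrev Act : Type := Finset Label

/-- A renaming: a partial injective function on labels preserving the involution. -/
structure Renaming where
  toFun : Label → Option Label
  inj : ∀ ⦃x y z : Label⦄, toFun x = some z → toFun y = some z → x = y
  bar : ∀ x : Label, toFun (Label.bar x) = (toFun x).map Label.bar

/-- The pointwise extension of a renaming to actions. -/
def Renaming.onAction (f : Renaming) (a : Act) : Act :=
  a.filterMap f.toFun (fun _ _ _ hx hy => f.inj (Option.mem_def.mp hx) (Option.mem_def.mp hy))

/-- Guarded process terms of CCS with simultaneous actions:
prefix, countably-indexed guarded sums (all guards non-`τ`), parallel composition,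
restriction, renaming, process variables (de Bruijn) and recursion. -/
inductive Proc : Type where
  | pre (a : Act) (P : Proc)
  | sum (I : Set ℕ) (act : ℕ → Act) (cont : ℕ → Proc) (hg : ∀ n ∈ I, (act n).Nonempty)
  | par (P Q : Proc)
  | restrict (P : Proc) (L : Set Label)
  | rename (P : Proc) (f : Renaming)
  | var (n : ℕ)
  | fix (P : Proc)

/-- The inactive process `0` (the empty sum). -/
def Proc.nil : Proc := .sum ∅ (fun _ => ∅) (fun _ => .var 0) (by simp)

/-- Substitution of a process for the variable with de Bruijn index `d`. -/
def Proc.subst (R : Proc) : ℕ → Proc → Proc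
  | d, .pre a P => .pre a (Proc.subst R d P)
  | d, .sum I act cont hg => .sum I act (fun n => Proc.subst R d (cont n)) hg
  | d, .par P Q => .par (Proc.subst R d P) (Proc.subst R d Q)
  | d, .restrict P L => .restrict (Proc.subst R d P) L
  | d, .rename P f => .rename (Proc.subst R d P) f
  | d, .var n => if n = d then R else .var n
  | d, .fix P => .fix (Proc.subst R (d + 1) P)

/-- The labelled transition relation, with the generalized synchronization rule
for simultaneous (compound) actions. -/
inductive Step : Proc → Act → Proc → Prop where
  | pre {a P} : Step (.pre a P) a P
  | sum {I act cont hg} (j : ℕ) (hj : j ∈ I) : Step (.sum I act cont hg) (act j) (cont j)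
  | restrict {P a Q L} : Step P a Q → (∀ l ∈ a, l ∉ L ∧ Label.bar l ∉ L) →
      Step (.restrict P L) a (.restrict Q L)
  | rename {P a Q} {f : Renaming} : Step P a Q → (∀ l ∈ a, (f.toFun l).isSome) →
      Step (.rename P f) (f.onAction a) (.rename Q f)
  | fix {P a Q} : Step (Proc.subst (.fix P) 0 P) a Q → Step (.fix P) a Q
  | parL {P a P' Q} : Step P a P' → Step (.par P Q) a (.par P' Q)
  | parR {P Q a Q'} : Step Q a Q' → Step (.par P Q) a (.par P Q')
  | sync {P Q P' Q' a b c} : Step P (a ∪ b) P' → Step Q (b.image Label.bar ∪ c) Q' →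
      Disjoint a b → Disjoint (b.image Label.bar) c → Disjoint a c →
      Step (.par P Q) (a ∪ c) (.par P' Q')

/-- Zero or more silent (`τ`) transitions. -/
def TauStar : Proc → Proc → Prop :=
  Relation.ReflTransGen (fun P Q => Step P ∅ Q)

/-- Observable transition `P ⟹a Q`: `τ* a τ*`. -/
def Obs (P : Proc) (a : Act) (Q : Proc) : Prop :=
  ∃ P₁ P₂, TauStar P P₁ ∧ Step P₁ a P₂ ∧ TauStar P₂ Q

/-- Observable transitions along a string of (non-`τ`) actions. -/
inductive ObsSeq : Proc → List Act → Proc → Prop where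
  | nil {P Q} : TauStar P Q → ObsSeq P [] Q
  | cons {P a Q s R} : Obs P a Q → ObsSeq Q s R → ObsSeq P (a :: s) R

/-- The failures of a process: pairs `(s, X)` with `s` a string of nonempty actions and
`X` a set of nonempty actions such that `P ⟹s Q` for some `Q` refusing every action of `X`. -/
def failures (P : Proc) : Set (List Act × Set Act) :=
  { sX | (∀ a ∈ sX.1, a.Nonempty) ∧ (∀ a ∈ sX.2, a.Nonempty) ∧
      ∃ Q, ObsSeq P sX.1 Q ∧ ∀ a ∈ sX.2, ¬∃ R, Obs Q a R }

/-- Failures equivalence. -/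
def FailEq (P Q : Proc) : Prop := failures P = failures Q

/-- Weak simulations (with respect to the observable transitions). -/
def IsWeakSim (R : Proc → Proc → Prop) : Prop :=
  ∀ ⦃P Q⦄, R P Q →
    (∀ P', TauStar P P' → ∃ Q', TauStar Q Q' ∧ R P' Q') ∧
    (∀ a P', (a : Act).Nonempty → Obs P a P' → ∃ Q', Obs Q a Q' ∧ R P' Q')

/-- Weak bisimilarity. -/
def WeakBisim (P Q : Proc) : Prop :=
  ∃ R : Proc → Proc → Prop, IsWeakSim R ∧ IsWeakSim (fun x y => R y x) ∧ R P Q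
/-! ## The split name space and the basic combinators -/

/-- Build a bar-preserving partial injective renaming from a partial injective map on names. -/
def Renaming.ofNameFun (f : ℕ → Option ℕ)
    (hf : ∀ ⦃x y z : ℕ⦄, f x = some z → f y = some z → x = y) : Renaming where
  toFun := fun l =>
    match l with
    | .inl n => (f n).map .inl
    | .inr n => (f n).map .inr
  inj := by
    rintro (x | x) (y | y) (z | z) hx hy <;>
      simp only [Option.map_eq_some_iff] at hx hy <;>
      obtain ⟨a, ha, ha'⟩ := hx <;> obtain ⟨b, hb, hb'⟩ := hy <;>
        solve
          | (cases ha'; cases hb'; exact congrArg _ (hf ha hb))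
          | (cases hb')
          | (cases ha')
  bar := by
    rintro (n | n) <;> cases hf : f n <;> simp [Label.bar, hf]

/-- The underlying name of a label. -/
def Label.name : Label → ℕ := Sum.elim id id

/-- The injection `l` of the name space onto its "left" half (even names). -/
def lRen : Renaming := Renaming.ofNameFun (fun n => some (2 * n)) (by intro x y z hx hy; simp only [Option.some.injEq] at hx hy; omega)

/-- The injection `r` of the name space onto its "right" half (odd names). -/
def rRen : Renaming := Renaming.ofNameFun (fun n => some (2 * n + 1)) (by intro x y z hx hy; simp only [Option.some.injEq] at hx hy; omega)

/-- The partial inverse `l⁻¹` of `l`. -/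
def lInv : Renaming :=
  Renaming.ofNameFun (fun n => if n % 2 = 0 then some (n / 2) else none)
    (by intro x y z hx hy; try dsimp only at hx hy
        split at hx <;> split at hy <;> simp_all <;> omega)

/-- The partial inverse `r⁻¹` of `r`. -/
def rInv : Renaming :=
  Renaming.ofNameFun (fun n => if n % 2 = 1 then some (n / 2) else none)
    (by intro x y z hx hy; try dsimp only at hx hy
        split at hx <;> split at hy <;> simp_all <;> omega)

/-- The left half `ℒ_l` of the label space. -/
def LabL : Set Label := {x | x.name % 2 = 0}

/-- The right half `ℒ_r` of the label space. -/
def LabR : Set Label := {x | x.name % 2 = 1}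

/-- Tensor product: disjoint (non-communicating) parallel composition `P[l] | Q[r]`. -/
def tensor (P Q : Proc) : Proc := .par (P.rename lRen) (Q.rename rRen)

/-- Left (forwards) application `⟨Q | P⟩ = ((Q[l] | P) ∖ ℒ_l)[r⁻¹]`. -/
def lapp (Q P : Proc) : Proc := ((Proc.par (Q.rename lRen) P).restrict LabL).rename rInv

/-- Right (reverse) application `(P | R⟩ = ((P | R[r]) ∖ ℒ_r)[l⁻¹]`. -/
def rapp (P R : Proc) : Proc := ((Proc.par P (R.rename rRen)).restrict LabR).rename lInv

/-! ### The three-fold decomposition `𝒩 = 𝒩₁ ∪̇ 𝒩₂ ∪̇ 𝒩₃` and composition -/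

/-- `φ₁₂ : 𝒩 ≅ 𝒩₁ ∪̇ 𝒩₂` (`𝒩ᵢ` = names `≡ i - 1 (mod 3)`), carrying `𝒩_l` onto `𝒩₁`, `𝒩_r` onto `𝒩₂`. -/
def phi12 : Renaming :=
  Renaming.ofNameFun (fun n => some (if n % 2 = 0 then 3 * (n / 2) else 3 * (n / 2) + 1))
    (by intro x y z hx hy; try dsimp only at hx hy
        simp only [Option.some.injEq] at hx hy
        split at hx <;> split at hy <;> omega)

/-- `φ₂₃ : 𝒩 ≅ 𝒩₂ ∪̇ 𝒩₃`, carrying `𝒩_l` onto `𝒩₂`, `𝒩_r` onto `𝒩₃`. -/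
def phi23 : Renaming :=
  Renaming.ofNameFun (fun n => some (if n % 2 = 0 then 3 * (n / 2) + 1 else 3 * (n / 2) + 2))
    (by intro x y z hx hy; try dsimp only at hx hy
        simp only [Option.some.injEq] at hx hy
        split at hx <;> split at hy <;> omega)

/-- The partial inverse `φ₁₃⁻¹` of `φ₁₃ : 𝒩 ≅ 𝒩₁ ∪̇ 𝒩₃`. -/
def phi13Inv : Renaming :=
  Renaming.ofNameFun
    (fun n => if n % 3 = 0 then some (2 * (n / 3)) else if n % 3 = 2 then some (2 * (n / 3) + 1) else none)
    (by intro x y z hx hy; try dsimp only at hx hy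
        split at hx <;> split at hy <;> simp_all <;> omega)

/-- The middle part `𝒩₂` of the label space (as a set of labels). -/
def Lab2 : Set Label := {x | x.name % 3 = 1}

/-- Composition `P ; Q = ((P[φ₁₂] | Q[φ₂₃]) ∖ 𝒩₂)[φ₁₃⁻¹]`. -/
def comp (P Q : Proc) : Proc :=
  ((Proc.par (P.rename phi12) (Q.rename phi23)).restrict Lab2).rename phi13Inv

/-! ### The identity (wire) process -/

/-- The identity process `I = rec X. Σ_{a ∈ Act₊} (l(a) ∪ r(a)‾).X`. -/
noncomputable def Iproc : Proc :=
  .fix (.sum {n | ∃ a : Act, (Encodable.decode n : Option Act) = some a ∧ a.Nonempty}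
    (fun n =>
      match (Encodable.decode n : Option Act) with
      | some a => lRen.onAction a ∪ (rRen.onAction a).image Label.bar
      | none => {Sum.inl 0})
    (fun _ => .var 0)
    (by rintro n ⟨a, ha, hne⟩
        simp only [ha]
        obtain ⟨x, hx⟩ := hne
        refine Finset.Nonempty.mono Finset.subset_union_left ⟨(Sum.map (2 * ·) (2 * ·)) x, ?_⟩
        simp only [Renaming.onAction, Finset.mem_filterMap]
        exact ⟨x, hx, by cases x <;> rfl⟩))

/-! ## Guarded choice combinators, the additive pairing and injections, `!P`, divergence -/

/-- Binary guarded sum `a.P + b.Q` (guards must be non-`τ`). -/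
def gsum2 (a : Act) (P : Proc) (b : Act) (Q : Proc) (ha : a.Nonempty) (hb : b.Nonempty) : Proc :=
  .sum {0, 1} (fun n => if n = 0 then a else b) (fun n => if n = 0 then P else Q)
    (by intro n _; (try dsimp only); split <;> assumption)

/-- Ternary guarded sum `a.P + b.Q + c.R`. -/
def gsum3 (a : Act) (P : Proc) (b : Act) (Q : Proc) (c : Act) (R : Proc)
    (ha : a.Nonempty) (hb : b.Nonempty) (hc : c.Nonempty) : Proc :=
  .sum {0, 1, 2} (fun n => if n = 0 then a else if n = 1 then b else c)
    (fun n => if n = 0 then P else if n = 1 then Q else R)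
    (by intro n _; (try dsimp only); split <;> [skip; split] <;> assumption)

/-- The distinguished names: `α = 0`, `β = 1`, `ω = 2`, `δ = 3`, `γ = 4`, `σ = 5`. -/
def αAct : Act := {Sum.inl 0}
def βAct : Act := {Sum.inl 1}
def αBar : Act := {Sum.inr 0}
def βBar : Act := {Sum.inr 1}
def ωAct : Act := {Sum.inl 2}
def δBar : Act := {Sum.inr 3}
def γBar : Act := {Sum.inr 4}

/-- The additive pairing `⟨P, Q⟩ = r(α).P + r(β).Q`  (`r(α) = 1`, `r(β) = 3`). -/
def pairR (P Q : Proc) : Proc :=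
  gsum2 {Sum.inl 1} P {Sum.inl 3} Q (Finset.singleton_nonempty _) (Finset.singleton_nonempty _)

/-- The plain additive pairing `α.P + β.Q` used in the realizability clauses for `&`. -/
def pairProc (P Q : Proc) : Proc :=
  gsum2 αAct P βAct Q (Finset.singleton_nonempty _) (Finset.singleton_nonempty _)

/-- The left injection `l(P) = l(α)‾.P`  (`l(α) = 0`). -/
def injl (P : Proc) : Proc := .pre {Sum.inr 0} P

/-- The right injection `r(Q) = r(β)‾.Q`  (`r(β) = 3`). -/
def injr (Q : Proc) : Proc := .pre {Sum.inr 3} Q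

/-- The exponential combinator `!P = rec X.(ω.0 + δ.P + γ.(X[l] | X[r]))`. -/
def bangProc (P : Proc) : Proc :=
  .fix (gsum3 ωAct Proc.nil ({Sum.inl 3} : Act) P ({Sum.inl 4} : Act)
    (.par (Proc.rename (.var 0) lRen) (Proc.rename (.var 0) rRen))
    (Finset.singleton_nonempty _) (Finset.singleton_nonempty _) (Finset.singleton_nonempty _))

/-- `P` diverges if there is an infinite sequence of `τ`-transitions from `P`. -/
def Diverges (P : Proc) : Prop :=
  ∃ f : ℕ → Proc, f 0 = P ∧ ∀ n, Step (f n) ∅ (f (n + 1))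

/-- `P ⊥ Q`: closing the system, `P` and `Q` interacting with each other yield no divergence. -/
def Orth (P Q : Proc) : Prop := ¬ Diverges ((Proc.par P Q).restrict Set.univ)

/-!
Allowing a component to idle, every transition of `P ; Q` is a joint move: `P` shows `u` on its
left interface, `Q` shows `v` on its right one, they synchronize over a set `b` of labels on the
interface between them, and `P ; Q` shows `u ∪ v`. Since the parity of names separates the two
interfaces of a process, both bracketings of `P ; Q ; R` move by exactly the same triples of
component moves. Hence re-association is a weak bisimulation, in which a silent step may be
matched by idling, and weak bisimilarity implies failures equivalence.
-/

/-- Letting a component idle turns the three transition rules for `|` into one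
(`stepOrIdle_par_iff`). -/
def StepOrIdle (P : Proc) (a : Act) (P' : Proc) : Prop :=
  Step P a P' ∨ (a = ∅ ∧ P' = P)

namespace StepOrIdle

theorem idle (P : Proc) : StepOrIdle P ∅ P := .inr ⟨rfl, rfl⟩

theorem step_of_nonempty {P P' : Proc} {a : Act} (h : StepOrIdle P a P') (ha : a.Nonempty) :
    Step P a P' :=
  h.resolve_right fun ⟨h₀, _⟩ => ha.ne_empty h₀

theorem tauStar {P P' : Proc} (h : StepOrIdle P ∅ P') : TauStar P P' := by
  rcases h with h | ⟨-, rfl⟩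
  exacts [.single h, .refl]

end StepOrIdle

theorem Renaming.onAction_empty (f : Renaming) : f.onAction ∅ = ∅ :=
  Finset.filterMap_empty _

theorem stepOrIdle_rename_iff {P W : Proc} {f : Renaming} {a : Act} :
    StepOrIdle (P.rename f) a W ↔ ∃ a₀ P', W = P'.rename f ∧ a = f.onAction a₀ ∧
      (∀ l ∈ a₀, (f.toFun l).isSome) ∧ StepOrIdle P a₀ P' := by
  constructor
  · rintro (h | ⟨rfl, rfl⟩)
    · cases h with
      | rename h hs => exact ⟨_, _, rfl, rfl, hs, .inl h⟩
    · exact ⟨∅, P, rfl, f.onAction_empty.symm, by simp, .idle P⟩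
  · rintro ⟨a₀, P', rfl, rfl, hs, h | ⟨rfl, rfl⟩⟩
    · exact .inl (.rename h hs)
    · exact .inr ⟨f.onAction_empty, rfl⟩

theorem stepOrIdle_restrict_iff {P W : Proc} {L : Set Label} {a : Act} :
    StepOrIdle (P.restrict L) a W ↔ ∃ P', W = P'.restrict L ∧
      (∀ l ∈ a, l ∉ L ∧ Label.bar l ∉ L) ∧ StepOrIdle P a P' := by
  constructor
  · rintro (h | ⟨rfl, rfl⟩)
    · cases h with
      | restrict h hL => exact ⟨_, rfl, hL, .inl h⟩
    · exact ⟨P, rfl, by simp, .idle P⟩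
  · rintro ⟨P', rfl, hL, h | ⟨rfl, rfl⟩⟩
    · exact .inl (.restrict h hL)
    · exact .idle _

theorem stepOrIdle_par_iff {P Q W : Proc} {a : Act} :
    StepOrIdle (P.par Q) a W ↔ ∃ P' Q' a₁ b c, W = P'.par Q' ∧ a = a₁ ∪ c ∧
      Disjoint a₁ b ∧ Disjoint (b.image Label.bar) c ∧ Disjoint a₁ c ∧
      StepOrIdle P (a₁ ∪ b) P' ∧ StepOrIdle Q (b.image Label.bar ∪ c) Q' := by
  constructor
  · rintro (h | ⟨rfl, rfl⟩)
    · cases h with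
      | parL h => exact ⟨_, Q, a, ∅, ∅, rfl, by simp, by simp, by simp, by simp,
          by simpa using .inl h, by simpa using .idle Q⟩
      | parR h => exact ⟨P, _, ∅, ∅, a, rfl, by simp, by simp, by simp, by simp,
          by simpa using .idle P, by simpa using .inl h⟩
      | sync hP hQ hab hbc hac => exact ⟨_, _, _, _, _, rfl, rfl, hab, hbc, hac, .inl hP, .inl hQ⟩
    · exact ⟨P, Q, ∅, ∅, ∅, rfl, by simp, by simp, by simp, by simp,
        by simpa using .idle P, by simpa using .idle Q⟩
  · rintro ⟨P', Q', a₁, b, c, rfl, rfl, hab, hbc, hac, hP | ⟨hP, rfl⟩, hQ | ⟨hQ, rfl⟩⟩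
    · exact .inl (.sync hP hQ hab hbc hac)
    · obtain ⟨hb, rfl⟩ := Finset.union_eq_empty.1 hQ
      obtain rfl := Finset.image_eq_empty.1 hb
      rw [Finset.union_empty] at hP
      simpa using .inl (.parL hP)
    · obtain ⟨rfl, rfl⟩ := Finset.union_eq_empty.1 hP
      rw [Finset.image_empty, Finset.empty_union] at hQ
      simpa using .inl (.parR hQ)
    · obtain ⟨rfl, rfl⟩ := Finset.union_eq_empty.1 hP
      obtain ⟨-, rfl⟩ := Finset.union_eq_empty.1 hQ
      simpa using .idle _

theorem IsWeakSim.of_stepOrIdle {R : Proc → Proc → Prop}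
    (h : ∀ ⦃P Q⦄, R P Q → ∀ a P', Step P a P' → ∃ Q', StepOrIdle Q a Q' ∧ R P' Q') :
    IsWeakSim R := by
  have tau : ∀ ⦃P Q⦄, R P Q → ∀ P', TauStar P P' → ∃ Q', TauStar Q Q' ∧ R P' Q' := by
    intro P Q hPQ P' hP
    induction hP with
    | refl => exact ⟨Q, .refl, hPQ⟩
    | tail _ hstep ih =>
      obtain ⟨Q₁, hQ₁, hR₁⟩ := ih
      obtain ⟨Q₂, hQ₂, hR₂⟩ := h hR₁ _ _ hstep
      exact ⟨Q₂, hQ₁.trans hQ₂.tauStar, hR₂⟩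
  refine fun P Q hPQ => ⟨tau hPQ, fun a P' ha ⟨P₁, P₂, hP₁, hstep, hP₂⟩ => ?_⟩
  obtain ⟨Q₁, hQ₁, hR₁⟩ := tau hPQ _ hP₁
  obtain ⟨Q₂, hQ₂, hR₂⟩ := h hR₁ _ _ hstep
  obtain ⟨Q', hQ', hR'⟩ := tau hR₂ _ hP₂
  exact ⟨Q', ⟨Q₁, Q₂, hQ₁, hQ₂.step_of_nonempty ha, hQ'⟩, hR'⟩

theorem IsWeakSim.obsSeq {R : Proc → Proc → Prop} (h : IsWeakSim R) {P Q P' : Proc}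
    {s : List Act} (hs : ∀ a ∈ s, a.Nonempty) (hPQ : R P Q) (hP : ObsSeq P s P') :
    ∃ Q', ObsSeq Q s Q' ∧ R P' Q' := by
  induction hP generalizing Q with
  | nil hτ =>
    obtain ⟨Q', hQ', hR'⟩ := (h hPQ).1 _ hτ
    exact ⟨Q', .nil hQ', hR'⟩
  | cons hobs _ ih =>
    obtain ⟨Q₁, hQ₁, hR₁⟩ := (h hPQ).2 _ _ (hs _ List.mem_cons_self) hobs
    obtain ⟨Q', hQ', hR'⟩ := ih (fun a ha => hs a (List.mem_cons_of_mem _ ha)) hR₁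
    exact ⟨Q', .cons hQ₁ hQ', hR'⟩

theorem failures_subset_of_isWeakSim {R : Proc → Proc → Prop} (h : IsWeakSim R)
    (h' : IsWeakSim fun x y => R y x) {P Q : Proc} (hPQ : R P Q) : failures P ⊆ failures Q := by
  rintro ⟨s, X⟩ ⟨hs, hX, P', hP', hrefuse⟩
  obtain ⟨Q', hQ', hR⟩ := h.obsSeq hs hPQ hP'
  refine ⟨hs, hX, Q', hQ', fun a ha ⟨Q'', hQ''⟩ => ?_⟩
  obtain ⟨P'', hP'', -⟩ := (h' hR).2 a Q'' (hX a ha) hQ''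
  exact hrefuse a ha ⟨P'', hP''⟩

theorem WeakBisim.failEq {P Q : Proc} (h : WeakBisim P Q) : FailEq P Q := by
  obtain ⟨R, hR, hR', hPQ⟩ := h
  exact (failures_subset_of_isWeakSim hR hR' hPQ).antisymm
    (failures_subset_of_isWeakSim hR' hR hPQ)

theorem Finset.filter_union_eq_left {α : Type*} [DecidableEq α] {p : α → Prop} [DecidablePred p]
    {s t : Finset α} (hs : ∀ x ∈ s, p x) (ht : ∀ x ∈ t, ¬ p x) : (s ∪ t).filter p = s := by
  rw [Finset.filter_union, Finset.filter_true_of_mem hs, Finset.filter_false_of_mem ht,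
    Finset.union_empty]

theorem Finset.filter_image_eq_image_filter {α β : Type*} [DecidableEq β] {f : α → β}
    {s : Finset α} {p : α → Prop} {q : β → Prop} [DecidablePred p] [DecidablePred q]
    (h : ∀ x, q (f x) ↔ p x) : (s.image f).filter q = (s.filter p).image f := by
  rw [Finset.filter_image]
  exact congrArg _ (Finset.filter_congr fun x _ => h x)

def phi12Nat (n : ℕ) : ℕ := if n % 2 = 0 then 3 * (n / 2) else 3 * (n / 2) + 1

def phi23Nat (n : ℕ) : ℕ := if n % 2 = 0 then 3 * (n / 2) + 1 else 3 * (n / 2) + 2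

def phi13InvNat (n : ℕ) : ℕ := if n % 3 = 0 then 2 * (n / 3) else 2 * (n / 3) + 1

theorem phi13InvNat_phi12Nat {n : ℕ} (h : n % 2 = 0) : phi13InvNat (phi12Nat n) = n := by
  unfold phi13InvNat phi12Nat; split_ifs <;> omega

theorem phi13InvNat_phi23Nat {n : ℕ} (h : n % 2 = 1) : phi13InvNat (phi23Nat n) = n := by
  unfold phi13InvNat phi23Nat; split_ifs <;> omega

theorem phi23Nat_pred {n : ℕ} (h : n % 2 = 1) : phi23Nat (n - 1) = phi12Nat n := by
  unfold phi23Nat phi12Nat; split_ifs <;> omega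

theorem phi23Nat_injective : Function.Injective phi23Nat := by
  intro m n h; unfold phi23Nat at h; split_ifs at h <;> omega

def Label.mapName (g : ℕ → ℕ) : Label → Label := Sum.map g g

theorem Label.name_mapName (g : ℕ → ℕ) (l : Label) : (l.mapName g).name = g l.name := by
  cases l <;> rfl

theorem Label.name_mapName_phi12Nat_mod_three (l : Label) :
    (l.mapName phi12Nat).name % 3 = l.name % 2 := by
  rw [Label.name_mapName]; unfold phi12Nat; split <;> omega

theorem Label.name_mapName_phi23Nat_mod_three (l : Label) :
    (l.mapName phi23Nat).name % 3 = l.name % 2 + 1 := by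
  rw [Label.name_mapName]; unfold phi23Nat; split <;> omega

theorem Label.name_bar (l : Label) : l.bar.name = l.name := by
  cases l <;> rfl

theorem Label.mapName_injective {g : ℕ → ℕ} (hg : Function.Injective g) :
    Function.Injective (Label.mapName g) :=
  Sum.map_injective.2 ⟨hg, hg⟩

/-- The label of `Q`'s left interface that synchronizes, in `P ; Q`, with the label `l` of
`P`'s right interface. -/
def Label.partner (l : Label) : Label := (l.mapName (· - 1)).bar

theorem Label.name_partner (l : Label) : l.partner.name = l.name - 1 := by
  cases l <;> rfl

theorem Label.mapName_phi23Nat_partner {l : Label} (h : l.name % 2 = 1) :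
    l.partner.mapName phi23Nat = (l.mapName phi12Nat).bar := by
  rcases l with n | n <;> exact congrArg _ (phi23Nat_pred h)

theorem Label.mapName_phi13InvNat_phi12Nat {l : Label} (h : l.name % 2 = 0) :
    (l.mapName phi12Nat).mapName phi13InvNat = l := by
  rcases l with n | n <;> exact congrArg _ (phi13InvNat_phi12Nat h)

theorem Label.mapName_phi13InvNat_phi23Nat {l : Label} (h : l.name % 2 = 1) :
    (l.mapName phi23Nat).mapName phi13InvNat = l := by
  rcases l with n | n <;> exact congrArg _ (phi13InvNat_phi23Nat h)

theorem Renaming.onAction_eq_image {f : Renaming} {g : Label → Label} {s : Act}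
    (hf : ∀ l ∈ s, f.toFun l = some (g l)) : f.onAction s = s.image g := by
  ext y
  simp only [Renaming.onAction, Finset.mem_filterMap, Finset.mem_image]
  exact exists_congr fun x => and_congr_right fun hx => by rw [hf x hx, Option.some_inj]

theorem phi12_toFun (l : Label) : phi12.toFun l = some (l.mapName phi12Nat) := by
  cases l <;> rfl

theorem phi23_toFun (l : Label) : phi23.toFun l = some (l.mapName phi23Nat) := by
  cases l <;> rfl

theorem phi13Inv_toFun {l : Label} (h : l.name % 3 ≠ 1) :
    phi13Inv.toFun l = some (l.mapName phi13InvNat) := by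
  have key : ∀ n : ℕ, n % 3 ≠ 1 → (if n % 3 = 0 then some (2 * (n / 3))
      else if n % 3 = 2 then some (2 * (n / 3) + 1) else none) = some (phi13InvNat n) := by
    intro n hn; unfold phi13InvNat; split_ifs <;> first | rfl | omega
  rcases l with n | n <;> exact congrArg (Option.map _) (key n h)

theorem phi12_onAction (s : Act) : phi12.onAction s = s.image (Label.mapName phi12Nat) :=
  Renaming.onAction_eq_image fun l _ => phi12_toFun l

theorem phi23_onAction (s : Act) : phi23.onAction s = s.image (Label.mapName phi23Nat) :=
  Renaming.onAction_eq_image fun l _ => phi23_toFun l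

def Act.IsLeft (s : Act) : Prop := ∀ l ∈ s, l.name % 2 = 0

def Act.IsRight (s : Act) : Prop := ∀ l ∈ s, l.name % 2 = 1

theorem Act.isLeft_filter (s : Act) : Act.IsLeft (s.filter (·.name % 2 = 0)) :=
  fun _ hl => (Finset.mem_filter.1 hl).2

theorem Act.isRight_filter (s : Act) : Act.IsRight (s.filter (·.name % 2 = 1)) :=
  fun _ hl => (Finset.mem_filter.1 hl).2

theorem Act.filter_left_union_filter_right (s : Act) :
    s.filter (·.name % 2 = 0) ∪ s.filter (·.name % 2 = 1) = s := by
  ext l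
  simp only [Finset.mem_union, Finset.mem_filter]
  rcases Nat.mod_two_eq_zero_or_one l.name with h | h <;> simp [h]

theorem Act.IsRight.image_partner {b : Act} (hb : b.IsRight) : Act.IsLeft (b.image Label.partner) :=
  Finset.forall_mem_image.2 fun l hl => by rw [Label.name_partner]; have := hb l hl; omega

theorem Act.disjoint_of_mod_three {s t : Act} {i j : ℕ} (hs : ∀ l ∈ s, l.name % 3 = i)
    (ht : ∀ l ∈ t, l.name % 3 = j) (hij : i ≠ j) : Disjoint s t :=
  Finset.disjoint_left.2 fun l hl hl' => hij ((hs l hl).symm.trans (ht l hl'))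

theorem Act.union_inj {u b u' b' : Act} (hu : u.IsLeft) (hb : b.IsRight) (hu' : u'.IsLeft)
    (hb' : b'.IsRight) (h : u ∪ b = u' ∪ b') : u = u' ∧ b = b' := by
  have split : ∀ {u b : Act}, u.IsLeft → b.IsRight →
      (u ∪ b).filter (·.name % 2 = 0) = u ∧ (u ∪ b).filter (·.name % 2 = 1) = b :=
    fun {u b} hu hb =>
      ⟨Finset.filter_union_eq_left hu fun l hl => by rw [hb l hl]; omega,
        Finset.union_comm u b ▸ Finset.filter_union_eq_left hb fun l hl => by rw [hu l hl]; omega⟩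
  obtain ⟨hl, hr⟩ := split hu hb
  obtain ⟨hl', hr'⟩ := split hu' hb'
  rw [h] at hl hr
  exact ⟨hl.symm.trans hl', hr.symm.trans hr'⟩

theorem phi13Inv_onAction_union {u v : Act} (hu : u.IsLeft) (hv : v.IsRight) :
    phi13Inv.onAction (u.image (Label.mapName phi12Nat) ∪ v.image (Label.mapName phi23Nat)) =
      u ∪ v := by
  have hclass : ∀ l ∈ u.image (Label.mapName phi12Nat) ∪ v.image (Label.mapName phi23Nat),
      l.name % 3 ≠ 1 := by
    simp only [Finset.mem_union, or_imp, forall_and, Finset.forall_mem_image,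
      Label.name_mapName_phi12Nat_mod_three, Label.name_mapName_phi23Nat_mod_three]
    exact ⟨fun l hl => by rw [hu l hl]; omega, fun l hl => by rw [hv l hl]; omega⟩
  rw [Renaming.onAction_eq_image fun l hl => phi13Inv_toFun (hclass l hl), Finset.image_union,
    Finset.image_image, Finset.image_image]
  congr 1 <;> refine (Finset.image_congr fun l hl => ?_).trans Finset.image_id
  exacts [Label.mapName_phi13InvNat_phi12Nat (hu l hl), Label.mapName_phi13InvNat_phi23Nat (hv l hl)]

theorem Act.IsRight.image_phi23Nat_partner {b : Act} (hb : b.IsRight) :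
    (b.image Label.partner).image (Label.mapName phi23Nat) =
      (b.image (Label.mapName phi12Nat)).image Label.bar := by
  rw [Finset.image_image, Finset.image_image]
  exact Finset.image_congr fun l hl => Label.mapName_phi23Nat_partner (hb l hl)

/-- `P ; Q` moves by `u ∪ v`: `P` shows `u` on its left interface, `Q` shows `v` on its right
one, and the two synchronize over `b` on `P`'s right interface. -/
def CompMove (P Q : Proc) (a : Act) (P' Q' : Proc) : Prop :=
  ∃ u b v : Act, u.IsLeft ∧ b.IsRight ∧ v.IsRight ∧ a = u ∪ v ∧
    StepOrIdle P (u ∪ b) P' ∧ StepOrIdle Q (b.image Label.partner ∪ v) Q'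


theorem stepOrIdle_comp_of_compMove {P Q P' Q' : Proc} {a : Act} (h : CompMove P Q a P' Q') :
    StepOrIdle (comp P Q) a (comp P' Q') := by
  obtain ⟨u, b, v, hu, hb, hv, rfl, hP, hQ⟩ := h
  have hu₀ : ∀ l ∈ u.image (Label.mapName phi12Nat), l.name % 3 = 0 :=
    Finset.forall_mem_image.2 fun l hl => by rw [Label.name_mapName_phi12Nat_mod_three, hu l hl]
  have hb₁ : ∀ l ∈ b.image (Label.mapName phi12Nat), l.name % 3 = 1 :=
    Finset.forall_mem_image.2 fun l hl => by rw [Label.name_mapName_phi12Nat_mod_three, hb l hl]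
  have hb₁' : ∀ l ∈ (b.image (Label.mapName phi12Nat)).image Label.bar, l.name % 3 = 1 :=
    Finset.forall_mem_image.2 fun l hl => by rw [Label.name_bar, hb₁ l hl]
  have hv₂ : ∀ l ∈ v.image (Label.mapName phi23Nat), l.name % 3 = 2 :=
    Finset.forall_mem_image.2 fun l hl => by rw [Label.name_mapName_phi23Nat_mod_three, hv l hl]
  have hclass : ∀ l ∈ u.image (Label.mapName phi12Nat) ∪ v.image (Label.mapName phi23Nat),
      l.name % 3 ≠ 1 := by
    intro l hl
    rcases Finset.mem_union.1 hl with hl | hl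
    exacts [(hu₀ l hl).trans_ne (by decide), (hv₂ l hl).trans_ne (by decide)]
  rw [comp, comp, ← phi13Inv_onAction_union hu hv]
  refine stepOrIdle_rename_iff.2 ⟨_, _, rfl, rfl, ?_, stepOrIdle_restrict_iff.2 ⟨_, rfl, ?_,
    stepOrIdle_par_iff.2 ⟨_, _, _, b.image (Label.mapName phi12Nat), _, rfl, rfl,
      Act.disjoint_of_mod_three hu₀ hb₁ (by decide), Act.disjoint_of_mod_three hb₁' hv₂ (by decide),
      Act.disjoint_of_mod_three hu₀ hv₂ (by decide), ?_, ?_⟩⟩⟩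
  · exact fun l hl => by rw [phi13Inv_toFun (hclass l hl)]; rfl
  · exact fun l hl => ⟨hclass l hl, show l.bar.name % 3 ≠ 1 from Label.name_bar l ▸ hclass l hl⟩
  · rw [← Finset.image_union, ← phi12_onAction]
    exact stepOrIdle_rename_iff.2 ⟨_, _, rfl, rfl, fun l _ => by rw [phi12_toFun]; rfl, hP⟩
  · rw [← hb.image_phi23Nat_partner, ← Finset.image_union, ← phi23_onAction]
    exact stepOrIdle_rename_iff.2 ⟨_, _, rfl, rfl, fun l _ => by rw [phi23_toFun]; rfl, hQ⟩

theorem sync_parts_mod_three {a₁ b c u' v' : Act}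
    (hu' : a₁ ∪ b = u'.image (Label.mapName phi12Nat))
    (hv' : b.image Label.bar ∪ c = v'.image (Label.mapName phi23Nat))
    (hac : ∀ l ∈ a₁ ∪ c, l.name % 3 ≠ 1) :
    (∀ l ∈ a₁, l.name % 3 = 0) ∧ (∀ l ∈ b, l.name % 3 = 1) ∧ (∀ l ∈ c, l.name % 3 = 2) := by
  have h12 : ∀ l ∈ a₁ ∪ b, l.name % 3 ≤ 1 := by
    rw [hu']
    exact Finset.forall_mem_image.2 fun l _ => by rw [Label.name_mapName_phi12Nat_mod_three]; omega
  have h23 : ∀ l ∈ b.image Label.bar ∪ c, 1 ≤ l.name % 3 := by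
    rw [hv']
    exact Finset.forall_mem_image.2 fun l _ => by rw [Label.name_mapName_phi23Nat_mod_three]; omega
  refine ⟨fun l hl => ?_, fun l hl => ?_, fun l hl => ?_⟩
  · have := h12 l (Finset.mem_union_left _ hl); have := hac l (Finset.mem_union_left _ hl); omega
  · have := h12 l (Finset.mem_union_right _ hl)
    have := h23 l.bar (Finset.mem_union_left _ (Finset.mem_image_of_mem _ hl))
    rw [Label.name_bar] at this; omega
  · have := h23 l (Finset.mem_union_right _ hl); have := hac l (Finset.mem_union_right _ hl); omega

theorem exists_compMove_split {a₁ b c u' v' : Act}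
    (hu' : a₁ ∪ b = u'.image (Label.mapName phi12Nat))
    (hv' : b.image Label.bar ∪ c = v'.image (Label.mapName phi23Nat))
    (hac : ∀ l ∈ a₁ ∪ c, l.name % 3 ≠ 1) :
    ∃ u b₀ v : Act, u.IsLeft ∧ b₀.IsRight ∧ v.IsRight ∧ phi13Inv.onAction (a₁ ∪ c) = u ∪ v ∧
      u' = u ∪ b₀ ∧ v' = b₀.image Label.partner ∪ v := by
  obtain ⟨ha₁, hb, hc⟩ := sync_parts_mod_three hu' hv' hac
  have hb' : ∀ l ∈ b.image Label.bar, l.name % 3 = 1 :=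
    Finset.forall_mem_image.2 fun l hl => by rw [Label.name_bar, hb l hl]
  -- each of `a₁, b, b̄, c` is one class mod 3 of an image, hence the image of one parity class
  have hA : a₁ = (u'.filter (·.name % 2 = 0)).image (Label.mapName phi12Nat) := by
    rw [← Finset.filter_image_eq_image_filter (q := (·.name % 3 = 0))
      fun l => by rw [Label.name_mapName_phi12Nat_mod_three], ← hu']
    exact (Finset.filter_union_eq_left ha₁ fun l hl => by rw [hb l hl]; decide).symm
  have hB : b = (u'.filter (·.name % 2 = 1)).image (Label.mapName phi12Nat) := by
    rw [← Finset.filter_image_eq_image_filter (q := (·.name % 3 = 1))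
      fun l => by rw [Label.name_mapName_phi12Nat_mod_three], ← hu', Finset.union_comm]
    exact (Finset.filter_union_eq_left hb fun l hl => by rw [ha₁ l hl]; decide).symm
  have hB' : b.image Label.bar = (v'.filter (·.name % 2 = 0)).image (Label.mapName phi23Nat) := by
    rw [← Finset.filter_image_eq_image_filter (q := (·.name % 3 = 1))
      fun l => by rw [Label.name_mapName_phi23Nat_mod_three]; omega, ← hv']
    exact (Finset.filter_union_eq_left hb' fun l hl => by rw [hc l hl]; decide).symm
  have hC : c = (v'.filter (·.name % 2 = 1)).image (Label.mapName phi23Nat) := by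
    rw [← Finset.filter_image_eq_image_filter (q := (·.name % 3 = 2))
      fun l => by rw [Label.name_mapName_phi23Nat_mod_three]; omega, ← hv', Finset.union_comm]
    exact (Finset.filter_union_eq_left hc fun l hl => by rw [hb' l hl]; decide).symm
  have hsync : v'.filter (·.name % 2 = 0) = (u'.filter (·.name % 2 = 1)).image Label.partner :=
    Finset.image_injective (Label.mapName_injective phi23Nat_injective) <| by
      rw [← hB', hB, (Act.isRight_filter u').image_phi23Nat_partner]
  refine ⟨_, _, _, Act.isLeft_filter u', Act.isRight_filter u', Act.isRight_filter v', ?_,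
    (Act.filter_left_union_filter_right u').symm, ?_⟩
  · rw [hA, hC]
    exact phi13Inv_onAction_union (Act.isLeft_filter u') (Act.isRight_filter v')
  · rw [← hsync]
    exact (Act.filter_left_union_filter_right v').symm

theorem stepOrIdle_comp_iff {P Q W : Proc} {a : Act} :
    StepOrIdle (comp P Q) a W ↔ ∃ P' Q', W = comp P' Q' ∧ CompMove P Q a P' Q' := by
  refine ⟨fun h => ?_, fun ⟨P', Q', hW, h⟩ => hW ▸ stepOrIdle_comp_of_compMove h⟩
  obtain ⟨_, _, rfl, rfl, -, h⟩ := stepOrIdle_rename_iff.1 h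
  obtain ⟨_, rfl, hL, h⟩ := stepOrIdle_restrict_iff.1 h
  obtain ⟨_, _, a₁, b, c, rfl, rfl, -, -, -, hP, hQ⟩ := stepOrIdle_par_iff.1 h
  obtain ⟨u', P', rfl, hu', -, hP⟩ := stepOrIdle_rename_iff.1 hP
  obtain ⟨v', Q', rfl, hv', -, hQ⟩ := stepOrIdle_rename_iff.1 hQ
  rw [phi12_onAction] at hu'
  rw [phi23_onAction] at hv'
  obtain ⟨u, b₀, v, hu, hb₀, hv, ha, rfl, rfl⟩ :=
    exists_compMove_split hu' hv' fun l hl => (hL l hl).1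
  exact ⟨P', Q', rfl, u, b₀, v, hu, hb₀, hv, ha, hP, hQ⟩

theorem stepOrIdle_comp_assoc {P Q R W : Proc} {a : Act}
    (h : StepOrIdle (comp (comp P Q) R) a W) : ∃ P' Q' R', W = comp (comp P' Q') R' ∧
      StepOrIdle (comp P (comp Q R)) a (comp P' (comp Q' R')) := by
  obtain ⟨_, R', rfl, u, b, v, hu, hb, hv, rfl, hPQ, hR⟩ := stepOrIdle_comp_iff.1 h
  obtain ⟨P', Q', rfl, u₁, b₁, v₁, hu₁, hb₁, hv₁, hub, hP, hQ⟩ := stepOrIdle_comp_iff.1 hPQ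
  obtain ⟨rfl, rfl⟩ := Act.union_inj hu hb hu₁ hv₁ hub
  exact ⟨P', Q', R', rfl, stepOrIdle_comp_of_compMove ⟨u, b₁, v, hu, hb₁, hv, rfl, hP,
    stepOrIdle_comp_of_compMove ⟨_, b, v, hb₁.image_partner, hb, hv, rfl, hQ, hR⟩⟩⟩

theorem stepOrIdle_comp_assoc_symm {P Q R W : Proc} {a : Act}
    (h : StepOrIdle (comp P (comp Q R)) a W) : ∃ P' Q' R', W = comp P' (comp Q' R') ∧
      StepOrIdle (comp (comp P Q) R) a (comp (comp P' Q') R') := by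
  obtain ⟨P', _, rfl, u, b, v, hu, hb, hv, rfl, hP, hQR⟩ := stepOrIdle_comp_iff.1 h
  obtain ⟨Q', R', rfl, u₁, b₁, v₁, hu₁, hb₁, hv₁, hbv, hQ, hR⟩ := stepOrIdle_comp_iff.1 hQR
  obtain ⟨rfl, rfl⟩ := Act.union_inj hb.image_partner hv hu₁ hv₁ hbv
  exact ⟨P', Q', R', rfl, stepOrIdle_comp_of_compMove ⟨u, b₁, v, hu, hb₁, hv, rfl,
    stepOrIdle_comp_of_compMove ⟨u, b, b₁, hu, hb, hb₁, rfl, hP, hQ⟩, hR⟩⟩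

theorem weakBisim_comp_assoc (P Q R : Proc) :
    WeakBisim (comp (comp P Q) R) (comp P (comp Q R)) := by
  refine ⟨fun X Y => ∃ P Q R, X = comp (comp P Q) R ∧ Y = comp P (comp Q R),
    .of_stepOrIdle ?_, .of_stepOrIdle ?_, P, Q, R, rfl, rfl⟩
  · rintro _ _ ⟨P, Q, R, rfl, rfl⟩ a W h
    obtain ⟨P', Q', R', rfl, h'⟩ := stepOrIdle_comp_assoc (.inl h)
    exact ⟨_, h', P', Q', R', rfl, rfl⟩
  · rintro _ _ ⟨P, Q, R, rfl, rfl⟩ a W h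
    obtain ⟨P', Q', R', rfl, h'⟩ := stepOrIdle_comp_assoc_symm (.inl h)
    exact ⟨_, h', P', Q', R', rfl, rfl⟩

/-- **Composition of processes is associative up to failures equivalence.** -/
theorem comp_assoc_failures (P Q R : Proc) :
    FailEq (comp (comp P Q) R) (comp P (comp Q R)) :=
  (weakBisim_comp_assoc P Q R).failEq
end

section
/- The identity process I satisfies the unit laws for composition up to failures equivalence: P ; I ≈_f P and I ; P ≈_f P for every process P. -/
set_option linter.unnecessarySeqFocus false

/-!
Composition with the wire is a functional strong bisimulation: the transitions of `P ; I` are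
exactly `P ; I --a--> P' ; I` for the transitions `P --a--> P'`, and likewise for `I ; P`.
When `P` performs `l(u) ∪ r(v)`, the half `r(v)` lands on the middle names `𝒩₂`, where the wire
meets it with `l(v̄) ∪ r(v̄)‾ = l(v̄) ∪ r(v)` and, in the same simultaneous step, re-emits `r(v)`
on `𝒩₃`; the renaming `φ₁₃⁻¹` carries `𝒩₁ ∪ 𝒩₃` back to `𝒩`, so the composite performs
`l(u) ∪ r(v)` itself. Conversely, hiding `𝒩₂` forces the two halves of any synchronisation to be
split by name classes mod 3, so every transition of `P ; I` arises in this way. A functional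
strong bisimulation preserves `τ*`, observable transitions and therefore failures.
-/

open Function

namespace Label

def map (g : ℕ → ℕ) : Label → Label := Sum.map g g

def toLeft : Label → Label := map (2 * ·)

def toRight : Label → Label := map (2 * · + 1)

/-- For `j < 3`, `toPart j` maps `𝒩` onto `𝒩ⱼ₊₁`. -/
def toPart (j : ℕ) : Label → Label := map (3 * · + j)

@[simp] lemma name_map (g : ℕ → ℕ) (x : Label) : (map g x).name = g x.name := by
  cases x <;> rfl

@[simp] lemma name_bar_s5 (x : Label) : (bar x).name = x.name := by
  cases x <;> rfl

lemma bar_involutive : Involutive bar := by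
  intro x; cases x <;> rfl

lemma bar_map (g : ℕ → ℕ) (x : Label) : bar (map g x) = map g (bar x) := by
  cases x <;> rfl

lemma bar_toPart (j : ℕ) (x : Label) : bar (toPart j x) = toPart j (bar x) :=
  bar_map _ x

lemma map_injective {g : ℕ → ℕ} (hg : Injective g) : Injective (map g) :=
  Sum.map_injective.2 ⟨hg, hg⟩

lemma toLeft_injective : Injective toLeft :=
  map_injective fun _ _ h => by omega

lemma toRight_injective : Injective toRight :=
  map_injective fun _ _ h => by omega

lemma toPart_injective (j : ℕ) : Injective (toPart j) :=
  map_injective fun _ _ h => by omega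

lemma toLeft_ne_toRight (x y : Label) : toLeft x ≠ toRight y := fun h => by
  have := congrArg name h
  simp only [toLeft, toRight, name_map] at this
  omega

lemma toRight_ne_toLeft (x y : Label) : toRight x ≠ toLeft y :=
  (toLeft_ne_toRight y x).symm

lemma exists_eq_toLeft_or_toRight (y : Label) : (∃ x, y = toLeft x) ∨ ∃ x, y = toRight x := by
  obtain ⟨k, hk | hk⟩ := Nat.even_or_odd' y.name
  · left
    refine ⟨map (fun _ => k) y, ?_⟩
    cases y <;> simp_all [toLeft, map, name]
  · right
    refine ⟨map (fun _ => k) y, ?_⟩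
    cases y <;> simp_all [toRight, map, name]

lemma name_toPart_mod_three {j : ℕ} (hj : j < 3) (x : Label) : (toPart j x).name % 3 = j := by
  simp only [toPart, name_map]
  omega

end Label

open Label

lemma Finset.eq_of_union_eq_union {α : Type*} [DecidableEq α] {p : α → Prop} [DecidablePred p]
    {A B S T : Finset α} (h : A ∪ B = S ∪ T) (hA : ∀ x ∈ A, p x) (hB : ∀ x ∈ B, ¬p x)
    (hS : ∀ x ∈ S, p x) (hT : ∀ x ∈ T, ¬p x) : A = S ∧ B = T := by
  have filter_union_eq {A B : Finset α} (hA : ∀ x ∈ A, p x) (hB : ∀ x ∈ B, ¬p x) :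
      (A ∪ B).filter p = A ∧ (A ∪ B).filter (fun x => ¬p x) = B := by
    rw [Finset.filter_union, Finset.filter_union, Finset.filter_true_of_mem hA,
      Finset.filter_false_of_mem hB, Finset.filter_false_of_mem fun x hx => not_not.2 (hA x hx),
      Finset.filter_true_of_mem hB, Finset.union_empty, Finset.empty_union]
    exact ⟨rfl, rfl⟩
  obtain ⟨hpA, hpB⟩ := filter_union_eq hA hB
  obtain ⟨hpS, hpT⟩ := filter_union_eq hS hT
  rw [h] at hpA hpB
  exact ⟨hpA.symm.trans hpS, hpB.symm.trans hpT⟩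

namespace Act

@[simp] lemma image_bar_image_bar (s : Act) : (s.image bar).image bar = s := by
  rw [Finset.image_image, bar_involutive.comp_self, Finset.image_id]

lemma image_image_bar_comm {k : Label → Label} (hk : ∀ x, bar (k x) = k (bar x)) (s : Act) :
    (s.image bar).image k = (s.image k).image bar := by
  simp only [Finset.image_image]
  exact Finset.image_congr fun x _ => (hk x).symm

lemma mod_three_of_mem_image_toPart {s : Act} {j : ℕ} (hj : j < 3) {x : Label}
    (hx : x ∈ s.image (toPart j)) : x.name % 3 = j := by
  obtain ⟨y, -, rfl⟩ := Finset.mem_image.1 hx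
  exact name_toPart_mod_three hj y

lemma mod_three_of_mem_image_toPart_union {s t : Act} {i j : ℕ} (hi : i < 3) (hj : j < 3)
    {x : Label} (hx : x ∈ s.image (toPart i) ∪ t.image (toPart j)) :
    x.name % 3 = i ∨ x.name % 3 = j :=
  (Finset.mem_union.1 hx).imp (mod_three_of_mem_image_toPart hi) (mod_three_of_mem_image_toPart hj)

lemma disjoint_image_toPart {s t : Act} {i j : ℕ} (hi : i < 3) (hj : j < 3) (hij : i ≠ j) :
    Disjoint (s.image (toPart i)) (t.image (toPart j)) := by
  refine Finset.disjoint_left.2 fun x hxs hxt => hij ?_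
  obtain ⟨y, -, rfl⟩ := Finset.mem_image.1 hxs
  obtain ⟨z, -, hz⟩ := Finset.mem_image.1 hxt
  rw [← name_toPart_mod_three hi y, ← hz, name_toPart_mod_three hj z]

/-- The action `l(u) ∪ r(v)`. -/
def lr (u v : Act) : Act := u.image toLeft ∪ v.image toRight

lemma toLeft_mem_lr {u v : Act} {x : Label} : toLeft x ∈ lr u v ↔ x ∈ u := by
  simp [lr, toLeft_injective.eq_iff, toRight_ne_toLeft]

lemma toRight_mem_lr {u v : Act} {x : Label} : toRight x ∈ lr u v ↔ x ∈ v := by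
  simp [lr, toRight_injective.eq_iff, toLeft_ne_toRight]

lemma lr_inj {u v u' v' : Act} : lr u v = lr u' v' ↔ u = u' ∧ v = v' := by
  refine ⟨fun h => ⟨?_, ?_⟩, fun ⟨rfl, rfl⟩ => rfl⟩ <;> ext x
  · rw [← toLeft_mem_lr (v := v), h, toLeft_mem_lr]
  · rw [← toRight_mem_lr (u := u), h, toRight_mem_lr]

lemma exists_eq_lr (b : Act) : ∃ u v, b = lr u v := by
  refine ⟨b.preimage toLeft toLeft_injective.injOn,
    b.preimage toRight toRight_injective.injOn, ?_⟩
  ext y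
  rcases exists_eq_toLeft_or_toRight y with ⟨x, rfl⟩ | ⟨x, rfl⟩
  · rw [toLeft_mem_lr, Finset.mem_preimage]
  · rw [toRight_mem_lr, Finset.mem_preimage]

end Act

namespace Renaming

lemma onAction_image (f : Renaming) {k m : Label → Label} (h : ∀ x, f.toFun (k x) = some (m x))
    (s : Act) : f.onAction (s.image k) = s.image m := by
  ext y
  simp only [onAction, Finset.mem_filterMap, Finset.mem_image, exists_exists_and_eq_and, h,
    Option.some.injEq]

lemma onAction_eq_image_s5 (f : Renaming) {m : Label → Label} (h : ∀ x, f.toFun x = some (m x))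
    (s : Act) : f.onAction s = s.image m := by
  simpa using f.onAction_image (k := id) h s

lemma onAction_union (f : Renaming) (s t : Act) :
    f.onAction (s ∪ t) = f.onAction s ∪ f.onAction t := by
  ext y
  simp only [onAction, Finset.mem_filterMap, Finset.mem_union, or_and_right, exists_or]

end Renaming

lemma Step.rename_image_union {P P' : Proc} {f : Renaming} {k k' m m' : Label → Label}
    (hk : ∀ x, f.toFun (k x) = some (m x)) (hk' : ∀ x, f.toFun (k' x) = some (m' x)) {s t : Act}
    (h : Step P (s.image k ∪ t.image k') P') :
    Step (P.rename f) (s.image m ∪ t.image m') (P'.rename f) := by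
  have hdef : ∀ l ∈ s.image k ∪ t.image k', (f.toFun l).isSome := by
    simp only [Finset.mem_union, Finset.mem_image]
    rintro l (⟨x, -, rfl⟩ | ⟨x, -, rfl⟩) <;> simp [hk, hk']
  simpa only [Renaming.onAction_union, f.onAction_image hk, f.onAction_image hk'] using
    Step.rename h hdef

lemma Step.rename_inv {P X : Proc} {f : Renaming} {e : Act} (h : Step (P.rename f) e X) :
    ∃ b P', Step P b P' ∧ e = f.onAction b ∧ X = P'.rename f := by
  cases h with
  | rename h _ => exact ⟨_, _, h, rfl, rfl⟩

lemma Step.restrict_inv {P X : Proc} {L : Set Label} {e : Act} (h : Step (P.restrict L) e X) :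
    ∃ Q, Step P e Q ∧ (∀ l ∈ e, l ∉ L ∧ bar l ∉ L) ∧ X = Q.restrict L := by
  cases h with
  | restrict h hL => exact ⟨_, h, hL, rfl⟩

lemma Step.par_inv {P Q X : Proc} {e : Act} (h : Step (.par P Q) e X) :
    (∃ P', Step P e P' ∧ X = .par P' Q) ∨ (∃ Q', Step Q e Q' ∧ X = .par P Q') ∨
    ∃ a b c P' Q', Step P (a ∪ b) P' ∧ Step Q (b.image bar ∪ c) Q' ∧
      e = a ∪ c ∧ X = .par P' Q' := by
  cases h with
  | parL h => exact .inl ⟨_, h, rfl⟩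
  | parR h => exact .inr (.inl ⟨_, h, rfl⟩)
  | sync hP hQ => exact .inr (.inr ⟨_, _, _, _, _, hP, hQ, rfl, rfl⟩)

lemma lRen_toFun (x : Label) : lRen.toFun x = some (toLeft x) := by
  cases x <;> rfl

lemma rRen_toFun (x : Label) : rRen.toFun x = some (toRight x) := by
  cases x <;> rfl

lemma Renaming.ofNameFun_toFun_map {f : ℕ → Option ℕ}
    {hf : ∀ ⦃x y z : ℕ⦄, f x = some z → f y = some z → x = y} {g g' : ℕ → ℕ}
    (h : ∀ n, f (g n) = some (g' n)) (x : Label) :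
    (ofNameFun f hf).toFun (map g x) = some (map g' x) := by
  cases x <;> simp only [ofNameFun, map, Sum.map_inl, Sum.map_inr, h, Option.map_some]

lemma phi12_toFun_toLeft (x : Label) : phi12.toFun (toLeft x) = some (toPart 0 x) :=
  Renaming.ofNameFun_toFun_map (fun n => by rw [if_pos (by omega)]; congr 1; omega) x

lemma phi12_toFun_toRight (x : Label) : phi12.toFun (toRight x) = some (toPart 1 x) :=
  Renaming.ofNameFun_toFun_map (fun n => by rw [if_neg (by omega)]; congr 1; omega) x

lemma phi23_toFun_toLeft (x : Label) : phi23.toFun (toLeft x) = some (toPart 1 x) :=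
  Renaming.ofNameFun_toFun_map (fun n => by rw [if_pos (by omega)]; congr 1; omega) x

lemma phi23_toFun_toRight (x : Label) : phi23.toFun (toRight x) = some (toPart 2 x) :=
  Renaming.ofNameFun_toFun_map (fun n => by rw [if_neg (by omega)]; congr 1; omega) x

lemma phi13Inv_toFun_toPart_zero (x : Label) : phi13Inv.toFun (toPart 0 x) = some (toLeft x) :=
  Renaming.ofNameFun_toFun_map (fun n => by rw [if_pos (by omega)]; congr 1; omega) x

lemma phi13Inv_toFun_toPart_two (x : Label) : phi13Inv.toFun (toPart 2 x) = some (toRight x) :=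
  Renaming.ofNameFun_toFun_map
    (fun n => by rw [if_neg (by omega), if_pos (by omega)]; congr 1; omega) x

lemma Renaming.onAction_lr (f : Renaming) {m m' : Label → Label}
    (hl : ∀ x, f.toFun (toLeft x) = some (m x)) (hr : ∀ x, f.toFun (toRight x) = some (m' x))
    (u v : Act) : f.onAction (Act.lr u v) = u.image m ∪ v.image m' := by
  rw [Act.lr, f.onAction_union, f.onAction_image hl, f.onAction_image hr]

lemma Step.rename_inv_lr {P X : Proc} {f : Renaming} {m m' : Label → Label}
    (hl : ∀ x, f.toFun (toLeft x) = some (m x)) (hr : ∀ x, f.toFun (toRight x) = some (m' x))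
    {e : Act} (h : Step (P.rename f) e X) :
    ∃ u v P', Step P (Act.lr u v) P' ∧ e = u.image m ∪ v.image m' ∧ X = P'.rename f := by
  obtain ⟨b, P', hb, rfl, rfl⟩ := h.rename_inv
  obtain ⟨u, v, rfl⟩ := Act.exists_eq_lr b
  exact ⟨u, v, P', hb, f.onAction_lr hl hr u v, rfl⟩

lemma phi13Inv_onAction (u w : Act) :
    phi13Inv.onAction (u.image (toPart 0) ∪ w.image (toPart 2)) = Act.lr u w := by
  rw [phi13Inv.onAction_union, phi13Inv.onAction_image phi13Inv_toFun_toPart_zero,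
    phi13Inv.onAction_image phi13Inv_toFun_toPart_two, Act.lr]

lemma Act.eq_of_sync {A B C u v v' w : Act}
    (hAB : A ∪ B = u.image (toPart 0) ∪ v.image (toPart 1))
    (hBC : B.image bar ∪ C = v'.image (toPart 1) ∪ w.image (toPart 2))
    (hAC : ∀ l ∈ A ∪ C, l.name % 3 ≠ 1) :
    A = u.image (toPart 0) ∧ v' = v.image bar ∧ C = w.image (toPart 2) := by
  have hA : ∀ x ∈ A, x.name % 3 = 0 := fun x hx => by
    have := mod_three_of_mem_image_toPart_union (by norm_num) (by norm_num)
      (hAB ▸ Finset.mem_union_left B hx)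
    have := hAC x (Finset.mem_union_left C hx)
    omega
  have hB : ∀ x ∈ B, x.name % 3 = 1 := fun x hx => by
    have := mod_three_of_mem_image_toPart_union (by norm_num) (by norm_num)
      (hAB ▸ Finset.mem_union_right A hx)
    have := mod_three_of_mem_image_toPart_union (by norm_num) (by norm_num)
      (hBC ▸ Finset.mem_union_left C (Finset.mem_image_of_mem bar hx))
    rw [name_bar_s5] at this
    omega
  obtain ⟨rfl, rfl⟩ := Finset.eq_of_union_eq_union (p := (·.name % 3 = 0)) hAB hA
    (fun x hx => by simp [hB x hx])
    (fun x => mod_three_of_mem_image_toPart (by norm_num))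
    (fun x hx => by simp [mod_three_of_mem_image_toPart (by norm_num) hx])
  obtain ⟨hv', rfl⟩ := Finset.eq_of_union_eq_union (p := (·.name % 3 = 1)) hBC
    (fun x hx => by obtain ⟨y, hy, rfl⟩ := Finset.mem_image.1 hx; simpa using hB y hy)
    (fun x hx => hAC x (Finset.mem_union_right _ hx))
    (fun x => mod_three_of_mem_image_toPart (by norm_num))
    (fun x hx => by simp [mod_three_of_mem_image_toPart (by norm_num) hx])
  rw [← image_image_bar_comm (bar_toPart 1)] at hv'
  exact ⟨rfl, (Finset.image_injective (toPart_injective 1) hv').symm, rfl⟩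

section Composition

variable {P Q P' Q' : Proc}

lemma Step.comp_of_par {u w : Act}
    (h : Step (.par (P.rename phi12) (Q.rename phi23)) (u.image (toPart 0) ∪ w.image (toPart 2))
      (.par (P'.rename phi12) (Q'.rename phi23))) :
    Step (comp P Q) (Act.lr u w) (comp P' Q') := by
  refine Step.rename_image_union phi13Inv_toFun_toPart_zero phi13Inv_toFun_toPart_two
    (Step.restrict h fun l hl => ?_)
  have := Act.mod_three_of_mem_image_toPart_union (by norm_num) (by norm_num) hl
  simp only [Lab2, Set.mem_ofPred_eq, name_bar_s5]
  omega

lemma Step.comp_left {u : Act} (h : Step P (Act.lr u ∅) P') :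
    Step (comp P Q) (Act.lr u ∅) (comp P' Q) := by
  refine Step.comp_of_par ?_
  simpa using (Step.rename_image_union phi12_toFun_toLeft phi12_toFun_toRight h).parL

lemma Step.comp_right {w : Act} (h : Step Q (Act.lr ∅ w) Q') :
    Step (comp P Q) (Act.lr ∅ w) (comp P Q') := by
  refine Step.comp_of_par ?_
  simpa using (Step.rename_image_union phi23_toFun_toLeft phi23_toFun_toRight h).parR

lemma Step.comp_sync {u v w : Act} (hP : Step P (Act.lr u v) P')
    (hQ : Step Q (Act.lr (v.image bar) w) Q') :
    Step (comp P Q) (Act.lr u w) (comp P' Q') := by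
  have hP' := Step.rename_image_union phi12_toFun_toLeft phi12_toFun_toRight hP
  have hQ' := Step.rename_image_union phi23_toFun_toLeft phi23_toFun_toRight hQ
  rw [Act.image_image_bar_comm (bar_toPart 1)] at hQ'
  refine Step.comp_of_par (Step.sync hP' hQ'
    (Act.disjoint_image_toPart (by norm_num) (by norm_num) (by norm_num)) ?_
    (Act.disjoint_image_toPart (by norm_num) (by norm_num) (by norm_num)))
  rw [← Act.image_image_bar_comm (bar_toPart 1)]
  exact Act.disjoint_image_toPart (by norm_num) (by norm_num) (by norm_num)

lemma Step.comp_inv {e : Act} {X : Proc} (h : Step (comp P Q) e X) :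
    (∃ u P', Step P (Act.lr u ∅) P' ∧ e = Act.lr u ∅ ∧ X = comp P' Q) ∨
    (∃ w Q', Step Q (Act.lr ∅ w) Q' ∧ e = Act.lr ∅ w ∧ X = comp P Q') ∨
    ∃ u v w P' Q', Step P (Act.lr u v) P' ∧ Step Q (Act.lr (v.image bar) w) Q' ∧
      e = Act.lr u w ∧ X = comp P' Q' := by
  obtain ⟨b, Y, hY, rfl, rfl⟩ := h.rename_inv
  obtain ⟨Z, hZ, hfree, rfl⟩ := hY.restrict_inv
  have hb : ∀ l ∈ b, l.name % 3 ≠ 1 := fun l hl => (hfree l hl).1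
  rcases hZ.par_inv with ⟨_, hPr, rfl⟩ | ⟨_, hQr, rfl⟩ |
    ⟨A, B, C, _, _, hPr, hQr, rfl, rfl⟩
  · obtain ⟨u, v, P', hP, rfl, rfl⟩ := hPr.rename_inv_lr phi12_toFun_toLeft phi12_toFun_toRight
    obtain rfl : v = ∅ := Finset.eq_empty_of_forall_notMem fun x hx =>
      hb _ (Finset.mem_union_right _ (Finset.mem_image_of_mem _ hx))
        (name_toPart_mod_three (by norm_num) x)
    exact .inl ⟨u, P', hP, by simpa using phi13Inv_onAction u ∅, rfl⟩
  · obtain ⟨u, w, Q', hQ, rfl, rfl⟩ := hQr.rename_inv_lr phi23_toFun_toLeft phi23_toFun_toRight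
    obtain rfl : u = ∅ := Finset.eq_empty_of_forall_notMem fun x hx =>
      hb _ (Finset.mem_union_left _ (Finset.mem_image_of_mem _ hx))
        (name_toPart_mod_three (by norm_num) x)
    exact .inr (.inl ⟨w, Q', hQ, by simpa using phi13Inv_onAction ∅ w, rfl⟩)
  · obtain ⟨u, v, P', hP, hAB, rfl⟩ := hPr.rename_inv_lr phi12_toFun_toLeft phi12_toFun_toRight
    obtain ⟨v', w, Q', hQ, hBC, rfl⟩ := hQr.rename_inv_lr phi23_toFun_toLeft phi23_toFun_toRight
    obtain ⟨rfl, rfl, rfl⟩ := Act.eq_of_sync hAB hBC hb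
    exact .inr (.inr ⟨u, v, w, P', Q', hP, hQ, phi13Inv_onAction u w, rfl⟩)

end Composition

lemma wire_action_eq (a : Act) :
    lRen.onAction a ∪ (rRen.onAction a).image bar = Act.lr a (a.image bar) := by
  rw [lRen.onAction_eq_image_s5 lRen_toFun, rRen.onAction_eq_image_s5 rRen_toFun,
    ← Act.image_image_bar_comm (k := toRight) (bar_map _), Act.lr]

lemma step_Iproc_iff {e : Act} {X : Proc} :
    Step Iproc e X ↔ ∃ a : Act, a.Nonempty ∧ e = Act.lr a (a.image bar) ∧ X = Iproc := by
  constructor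
  · intro h
    unfold Iproc at h
    cases h with
    | fix h =>
      simp only [Proc.subst, if_pos] at h
      cases h with
      | sum j hj =>
        obtain ⟨a, ha, hne⟩ := hj
        exact ⟨a, hne, by simp only [ha, wire_action_eq], rfl⟩
  · rintro ⟨a, ha, rfl, rfl⟩
    have h : Step Iproc _ Iproc :=
      Step.fix (Step.sum (Encodable.encode a) ⟨a, Encodable.encodek a, ha⟩)
    simpa only [Encodable.encodek, wire_action_eq] using h

def IsFunctionalBisim (F : Proc → Proc) : Prop :=
  ∀ P a X, Step (F P) a X ↔ ∃ P', Step P a P' ∧ X = F P'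

lemma Relation.reflTransGen_apply_iff {α β : Type*} {r : α → α → Prop} {s : β → β → Prop}
    {F : α → β} (hF : ∀ a c, s (F a) c ↔ ∃ b, r a b ∧ c = F b) {a : α} {c : β} :
    Relation.ReflTransGen s (F a) c ↔ ∃ b, Relation.ReflTransGen r a b ∧ c = F b := by
  constructor
  · intro h
    induction h with
    | refl => exact ⟨a, .refl, rfl⟩
    | tail _ hs ih =>
      obtain ⟨b, hb, rfl⟩ := ih
      obtain ⟨b', hb', rfl⟩ := (hF b _).1 hs
      exact ⟨b', hb.tail hb', rfl⟩
  · rintro ⟨b, h, rfl⟩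
    exact Relation.ReflTransGen.lift F (fun x y hxy => (hF x _).2 ⟨y, hxy, rfl⟩) _ _ h

namespace IsFunctionalBisim

variable {F : Proc → Proc}

lemma tauStar_iff (hF : IsFunctionalBisim F) {P X : Proc} :
    TauStar (F P) X ↔ ∃ P', TauStar P P' ∧ X = F P' :=
  Relation.reflTransGen_apply_iff fun P X => hF P ∅ X

lemma obs_iff (hF : IsFunctionalBisim F) {P X : Proc} {a : Act} :
    Obs (F P) a X ↔ ∃ P', Obs P a P' ∧ X = F P' := by
  constructor
  · rintro ⟨P₁, P₂, h₁, h₂, h₃⟩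
    obtain ⟨Q₁, hQ₁, rfl⟩ := hF.tauStar_iff.1 h₁
    obtain ⟨Q₂, hQ₂, rfl⟩ := (hF Q₁ a _).1 h₂
    obtain ⟨Q₃, hQ₃, rfl⟩ := hF.tauStar_iff.1 h₃
    exact ⟨Q₃, ⟨Q₁, Q₂, hQ₁, hQ₂, hQ₃⟩, rfl⟩
  · rintro ⟨P', ⟨P₁, P₂, h₁, h₂, h₃⟩, rfl⟩
    exact ⟨F P₁, F P₂, hF.tauStar_iff.2 ⟨P₁, h₁, rfl⟩, (hF P₁ a _).2 ⟨P₂, h₂, rfl⟩,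
      hF.tauStar_iff.2 ⟨P', h₃, rfl⟩⟩

lemma obsSeq_iff (hF : IsFunctionalBisim F) {P X : Proc} {s : List Act} :
    ObsSeq (F P) s X ↔ ∃ P', ObsSeq P s P' ∧ X = F P' := by
  constructor
  · intro h
    generalize hY : F P = Y at h
    induction h generalizing P with
    | nil h =>
      subst hY
      obtain ⟨P', h', rfl⟩ := hF.tauStar_iff.1 h
      exact ⟨P', .nil h', rfl⟩
    | cons h _ ih =>
      subst hY
      obtain ⟨Q', hQ', rfl⟩ := hF.obs_iff.1 h
      obtain ⟨R', hR', rfl⟩ := ih rfl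
      exact ⟨R', .cons hQ' hR', rfl⟩
  · rintro ⟨P', h, rfl⟩
    induction h with
    | nil h => exact .nil (hF.tauStar_iff.2 ⟨_, h, rfl⟩)
    | cons h _ ih => exact .cons (hF.obs_iff.2 ⟨_, h, rfl⟩) ih

lemma exists_obs_iff (hF : IsFunctionalBisim F) {Q : Proc} {a : Act} :
    (∃ R, Obs (F Q) a R) ↔ ∃ R, Obs Q a R :=
  ⟨fun ⟨_, h⟩ => (hF.obs_iff.1 h).imp fun _ h => h.1,
    fun ⟨R, h⟩ => ⟨F R, hF.obs_iff.2 ⟨R, h, rfl⟩⟩⟩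

lemma failEq (hF : IsFunctionalBisim F) (P : Proc) : FailEq (F P) P := by
  ext ⟨s, Xr⟩
  simp only [failures, Set.mem_ofPred_eq, hF.obsSeq_iff]
  refine and_congr_right' (and_congr_right' ⟨?_, ?_⟩)
  · rintro ⟨_, ⟨Q, hQ, rfl⟩, hr⟩
    exact ⟨Q, hQ, fun a ha => hF.exists_obs_iff.not.1 (hr a ha)⟩
  · rintro ⟨Q, hQ, hr⟩
    exact ⟨F Q, ⟨Q, hQ, rfl⟩, fun a ha => hF.exists_obs_iff.not.2 (hr a ha)⟩

end IsFunctionalBisim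

lemma isFunctionalBisim_comp_Iproc : IsFunctionalBisim (comp · Iproc) := by
  intro P e X
  constructor
  · intro h
    rcases h.comp_inv with ⟨u, P', hP, rfl, rfl⟩ | ⟨w, _, hI, -, -⟩ |
      ⟨u, v, w, P', _, hP, hI, rfl, rfl⟩
    · exact ⟨P', hP, rfl⟩
    · obtain ⟨a, ha, he, -⟩ := step_Iproc_iff.1 hI
      obtain ⟨rfl, -⟩ := Act.lr_inj.1 he
      exact absurd ha Finset.not_nonempty_empty
    · obtain ⟨a, -, he, rfl⟩ := step_Iproc_iff.1 hI
      obtain ⟨rfl, rfl⟩ := Act.lr_inj.1 he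
      exact ⟨P', by rwa [Act.image_bar_image_bar], rfl⟩
  · rintro ⟨P', hP, rfl⟩
    obtain ⟨u, v, rfl⟩ := Act.exists_eq_lr e
    obtain rfl | hv := v.eq_empty_or_nonempty
    · exact hP.comp_left
    · have hI := step_Iproc_iff.2 ⟨v.image bar, hv.image bar, rfl, rfl⟩
      rw [Act.image_bar_image_bar] at hI
      exact hP.comp_sync hI

lemma isFunctionalBisim_Iproc_comp : IsFunctionalBisim (comp Iproc ·) := by
  intro P e X
  constructor
  · intro h
    rcases h.comp_inv with ⟨u, _, hI, -, -⟩ | ⟨w, P', hP, rfl, rfl⟩ |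
      ⟨u, v, w, _, P', hI, hP, rfl, rfl⟩
    · obtain ⟨a, ha, he, -⟩ := step_Iproc_iff.1 hI
      obtain ⟨-, hbar⟩ := Act.lr_inj.1 he
      exact absurd (Finset.image_eq_empty.1 hbar.symm) ha.ne_empty
    · exact ⟨P', hP, rfl⟩
    · obtain ⟨a, -, he, rfl⟩ := step_Iproc_iff.1 hI
      obtain ⟨rfl, rfl⟩ := Act.lr_inj.1 he
      exact ⟨P', by rwa [Act.image_bar_image_bar] at hP, rfl⟩
  · rintro ⟨P', hP, rfl⟩
    obtain ⟨u, v, rfl⟩ := Act.exists_eq_lr e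
    obtain rfl | hu := u.eq_empty_or_nonempty
    · exact hP.comp_right
    · refine Step.comp_sync (step_Iproc_iff.2 ⟨u, hu, rfl, rfl⟩) ?_
      rwa [Act.image_bar_image_bar]

/-- **The identity process satisfies the unit laws for composition**:
`P ; I ≈_f P` and `I ; P ≈_f P`. -/
theorem wire_unit_for_comp (P : Proc) :
    FailEq (comp P Iproc) P ∧ FailEq (comp Iproc P) P :=
  ⟨isFunctionalBisim_comp_Iproc.failEq P, isFunctionalBisim_Iproc_comp.failEq P⟩
end
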